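/- arXiv:1311.4216 — 2 statements merged into one kernel-verified Lean document; each statement's English description precedes it below -/
import Mathlib

section
/- Let (a_m)_{m≥N} be complex numbers with |a_m| ≤ 1 for all m, and let q > N ≥ 2 be an integer with a_q ≠ 0, |a_q| = 1, and a_m = 0 for N ≤ m < q. Then lim_{s→∞} |∑_{m=N}^∞ a_m m^{−s}|^{−1/s} = q, where s ranges over real numbers tending to infinity. -/
/-!
The series is the L-series of the coefficients `a` restricted to `[N, ∞)`, whose abscissa of
absolute convergence is at most `1` because the coefficients are bounded. Its first nonzero
coefficient sits at `q`, so `q ^ s` times the series tends to `a q`, a number of norm `1`;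
taking `(-1/s)`-th powers then gives the limit `q`.
-/

open Filter Topology

lemma LSeries_indicator_Ici (a : ℕ → ℂ) (N : ℕ) {s : ℂ} (hs : s ≠ 0) :
    LSeries ((Set.Ici N).indicator a) s = ∑' m : {m : ℕ // N ≤ m}, a m / (m : ℂ) ^ s := by
  refine (tsum_congr fun m => ?_).trans
    (tsum_subtype (Set.Ici N) fun m : ℕ => a m / (m : ℂ) ^ s).symm
  rcases eq_or_ne m 0 with rfl | hm
  · simp [LSeries.term, Set.indicator_apply, Complex.zero_cpow hs]
  · by_cases hNm : N ≤ m <;> simp [LSeries.term, hm, hNm]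

lemma LSeries.tendsto_rpow_mul_norm_atTop {f : ℕ → ℂ} {q : ℕ} (hq : 0 < q)
    (h : ∀ m < q, f m = 0) (hf : abscissaOfAbsConv f < ⊤) :
    Tendsto (fun x : ℝ => (q : ℝ) ^ x * ‖LSeries f x‖) atTop (𝓝 ‖f q‖) := by
  obtain ⟨n, rfl⟩ : ∃ n, q = n + 1 := ⟨q - 1, by omega⟩
  refine (tendsto_cpow_mul_atTop (fun m hm => h m (by omega)) hf).norm.congr fun x => ?_
  rw [norm_mul, ← Nat.cast_add_one, Complex.norm_natCast_cpow_of_pos hq, Complex.ofReal_re]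

lemma Real.tendsto_rpow_neg_one_div_of_tendsto_rpow_mul {u : ℝ → ℝ} {q c : ℝ} (hq : 0 < q)
    (hc : 0 < c) (h : Tendsto (fun s => q ^ s * u s) atTop (𝓝 c)) :
    Tendsto (fun s => u s ^ (-1 / s)) atTop (𝓝 q) := by
  have hexp : Tendsto (fun s : ℝ => -1 / s) atTop (𝓝 0) :=
    tendsto_const_nhds.div_atTop tendsto_id
  have hone : Tendsto (fun s => (q ^ s * u s) ^ (-1 / s)) atTop (𝓝 1) := by
    simpa using h.rpow hexp (Or.inl hc.ne')
  rw [← mul_one q]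
  refine (hone.const_mul q).congr' ?_
  filter_upwards [h.eventually (eventually_gt_nhds hc), eventually_gt_atTop 0] with s hpos hs
  have hu : 0 < u s := pos_of_mul_pos_right hpos (by positivity)
  rw [Real.mul_rpow (by positivity) hu.le, ← Real.rpow_mul hq.le, mul_div_cancel₀ _ hs.ne',
    Real.rpow_neg_one, mul_inv_cancel_left₀ hq.ne']

theorem stmt_12_general (a : ℕ → ℂ) (N q : ℕ) (hq : N < q)
    (ha : ∀ m, N ≤ m → ‖a m‖ ≤ 1)
    (haq1 : ‖a q‖ = 1)
    (hzero : ∀ m, N ≤ m → m < q → a m = 0) :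
    Tendsto (fun s : ℝ =>
      ‖∑' m : {m : ℕ // N ≤ m}, a m / ((m : ℕ) : ℂ) ^ (s : ℂ)‖ ^ (-1 / s))
      atTop (nhds (q : ℝ)) := by
  set f := (Set.Ici N).indicator a
  have hf_conv : LSeries.abscissaOfAbsConv f < ⊤ :=
    (LSeries.abscissaOfAbsConv_le_of_le_const ⟨1, fun m _ => by
      by_cases hm : N ≤ m <;> simp [f, hm, ha]⟩).trans_lt (EReal.coe_lt_top 1)
  have hf_zero : ∀ m < q, f m = 0 := fun m hm => by
    by_cases hNm : N ≤ m <;> simp [f, hNm, hzero m, hm]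
  have hfq : ‖f q‖ = 1 := by simpa [f, hq.le] using haq1
  have hq_pos : 0 < q := by omega
  have hlim := LSeries.tendsto_rpow_mul_norm_atTop hq_pos hf_zero hf_conv
  rw [hfq] at hlim
  refine (Real.tendsto_rpow_neg_one_div_of_tendsto_rpow_mul (Nat.cast_pos.mpr hq_pos) one_pos
    hlim).congr' ?_
  filter_upwards [eventually_ne_atTop 0] with s hs
  rw [LSeries_indicator_Ici a N (Complex.ofReal_ne_zero.mpr hs)]

/-- Key limit-extraction lemma: if |aₘ| ≤ 1 for m ≥ N, q > N ≥ 2, |a_q| = 1, a_q ≠ 0,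
and aₘ = 0 for N ≤ m < q, then lim_{s→∞} |∑_{m≥N} aₘ m^{−s}|^{−1/s} = q. -/
theorem stmt_12 (a : ℕ → ℂ) (N q : ℕ) (hN : 2 ≤ N) (hq : N < q)
    (ha : ∀ m, N ≤ m → ‖a m‖ ≤ 1)
    (haq : a q ≠ 0) (haq1 : ‖a q‖ = 1)
    (hzero : ∀ m, N ≤ m → m < q → a m = 0) :
    Tendsto (fun s : ℝ =>
      ‖∑' m : {m : ℕ // N ≤ m}, a m / ((m : ℕ) : ℂ) ^ (s : ℂ)‖ ^ (-1 / s))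
      atTop (nhds (q : ℝ)) :=
  stmt_12_general a N q hq ha haq1 hzero
end

section
/- Let p₁ < ... < pₙ be the first n primes and pₙ₊₁ the next prime. Define E_n(s) = |pₙ₊₁ − [∑_{j=1}^{2pₙ−1} j^{−s} − ∏_{k=1}^n (1 − p_k^{−s})^{−1}]^{−1/s}| for real s large. Then E_n(s) → 0 as s → ∞, and moreover E_n(s) decays exponentially: there exist constants a > 0 and C such that E_n(s) ≤ C e^{−as} for all sufficiently large s. -/
/-!
Write `P = pₙ₊₁`. By the Euler product, `∏ₖ (1 - p_k^{-s})⁻¹` is the sum of `m^{-s}` over the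
`P`-smooth `m`. Every `m < P` is `P`-smooth, `P` is not, and by Bertrand's postulate `P` lies in
`[1, 2pₙ - 1]`; so the bracket is `P^{-s}` plus a remainder dominated by `∑_{m > P} m^{-s}`,
which is `O((P + 1)^{-s})`. Hence the bracket is `P^{-s}(1 + t)` with `t = O((P / (P + 1))^s)`,
and its `-1/s`-th power is `P(1 + O(t))`, giving the rate `a = log ((P + 1) / P)`.
-/

open Filter Real

namespace Nat

theorem nth_prime_succ_lt_two_mul (k : ℕ) : nth Prime (k + 1) < 2 * nth Prime k := by
  have hq := prime_nth_prime k
  obtain ⟨p, hp, hqp, hp2q⟩ := exists_prime_lt_and_le_two_mul (nth Prime k) hq.ne_zero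
  have hle : nth Prime (k + 1) ≤ p := by
    by_contra! h
    exact (le_nth_of_lt_nth_succ h hp).not_gt hqp
  have hne : p ≠ 2 * nth Prime k := by
    rintro rfl
    exact not_prime_mul (by norm_num) hq.one_lt.ne' hp
  omega

theorem primesBelow_nth_prime (n : ℕ) :
    (nth Prime n).primesBelow = (Finset.range n).image (nth Prime) := by
  induction n with
  | zero => simp [nth_prime_zero_eq_two, primesBelow_two]
  | succ k ih =>
    rw [primesBelow, filter_range_nth_eq_insert_of_infinite infinite_setOfPred_prime,
      ← primesBelow, ih, Finset.range_add_one, Finset.image_insert]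

theorem Prime.notMem_smoothNumbers_self {p : ℕ} (hp : p.Prime) : p ∉ p.smoothNumbers :=
  fun h ↦ (mem_smoothNumbers'.mp h p hp dvd_rfl).false

end Nat

open Nat in
theorem prod_range_one_sub_nth_prime_rpow_neg_inv {s : ℝ} (hs : 1 < s) (n : ℕ) :
    ∏ i ∈ Finset.range n, (1 - (nth Nat.Prime i : ℝ) ^ (-s))⁻¹ =
      ∑' m : (nth Nat.Prime n).smoothNumbers, ((m : ℕ) : ℝ) ^ (-s) := by
  let f : ℕ →* ℝ :=
    { toFun m := (m : ℝ) ^ (-s)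
      map_one' := by simp
      map_mul' x y := by push_cast; exact mul_rpow x.cast_nonneg y.cast_nonneg }
  have := EulerProduct.prod_primesBelow_geometric_eq_tsum_smoothNumbers (f := f)
    (summable_nat_rpow.mpr (by linarith)) (nth Nat.Prime n)
  rwa [primesBelow_nth_prime,
    Finset.prod_image fun i _ j _ h ↦ nth_injective infinite_setOfPred_prime h] at this

theorem abs_tsum_sub_le_tsum_nat_add {f g : ℕ → ℝ} {N : ℕ} (hf : Summable f)
    (hgf : ∀ m, |g m| ≤ f m) (hg : ∀ m < N, g m = 0) :
    |∑' m, g m - g N| ≤ ∑' m, f (m + (N + 1)) := by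
  have hgf' (m : ℕ) : ‖g m‖ ≤ f m := (Real.norm_eq_abs _).trans_le (hgf m)
  rw [← (Summable.of_norm_bounded hf hgf').sum_add_tsum_nat_add (N + 1), Finset.sum_range_succ,
    Finset.sum_eq_zero fun m hm ↦ hg m (Finset.mem_range.mp hm), zero_add, add_sub_cancel_left,
    ← Real.norm_eq_abs]
  exact tsum_of_norm_bounded ((summable_nat_add_iff _).mpr hf).hasSum fun m ↦ hgf' _

theorem tsum_nat_add_rpow_neg_le {N : ℕ} (hN : 0 < N) {s : ℝ} (hs : 2 ≤ s) :
    ∑' m : ℕ, ((m + N : ℕ) : ℝ) ^ (-s) ≤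
      (∑' m : ℕ, (m : ℝ) ^ (-2 : ℝ)) * (N : ℝ) ^ 2 * (N : ℝ) ^ (-s) := by
  have hN' : (0 : ℝ) < N := by exact_mod_cast hN
  have h2 : Summable fun m : ℕ ↦ (m : ℝ) ^ (-2 : ℝ) := summable_nat_rpow.mpr (by norm_num)
  have h2N : Summable fun m : ℕ ↦ ((m + N : ℕ) : ℝ) ^ (-2 : ℝ) :=
    (summable_nat_add_iff N).mpr h2
  have hsN : Summable fun m : ℕ ↦ ((m + N : ℕ) : ℝ) ^ (-s) :=
    (summable_nat_add_iff N).mpr (summable_nat_rpow.mpr (by linarith))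
  have hpt (m : ℕ) :
      ((m + N : ℕ) : ℝ) ^ (-s) ≤ (N : ℝ) ^ (2 - s) * ((m + N : ℕ) : ℝ) ^ (-2 : ℝ) := by
    have hmN : (N : ℝ) ≤ (m + N : ℕ) := by exact_mod_cast N.le_add_left m
    rw [show -s = (2 - s) + -2 by ring, rpow_add (hN'.trans_le hmN)]
    gcongr ?_ * _
    exact rpow_le_rpow_of_nonpos hN' hmN (by linarith)
  have htail : ∑' m : ℕ, ((m + N : ℕ) : ℝ) ^ (-2 : ℝ) ≤ ∑' m : ℕ, (m : ℝ) ^ (-2 : ℝ) := by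
    rw [← h2.sum_add_tsum_nat_add N]
    exact le_add_of_nonneg_left (Finset.sum_nonneg fun _ _ ↦ by positivity)
  calc ∑' m : ℕ, ((m + N : ℕ) : ℝ) ^ (-s)
      ≤ ∑' m : ℕ, (N : ℝ) ^ (2 - s) * ((m + N : ℕ) : ℝ) ^ (-2 : ℝ) :=
        hsN.tsum_le_tsum hpt (h2N.mul_left _)
    _ = (N : ℝ) ^ (2 - s) * ∑' m : ℕ, ((m + N : ℕ) : ℝ) ^ (-2 : ℝ) := tsum_mul_left
    _ ≤ (N : ℝ) ^ (2 - s) * ∑' m : ℕ, (m : ℝ) ^ (-2 : ℝ) := by gcongr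
    _ = _ := by rw [sub_eq_add_neg, rpow_add hN', rpow_two]; ring

theorem abs_indicator_sub_indicator_le {α : Type*} {f : α → ℝ} (hf : 0 ≤ f) (s t : Set α)
    (a : α) : |s.indicator f a - t.indicator f a| ≤ f a := by
  have h0 : 0 ≤ f a := hf a
  by_cases hs : a ∈ s <;> by_cases ht : a ∈ t <;>
    simp only [hs, ht, Set.indicator_of_mem, Set.indicator_of_notMem, not_false_eq_true, sub_self,
      sub_zero, zero_sub, abs_neg, abs_zero, abs_of_nonneg h0, le_refl, h0]

theorem abs_sum_Icc_sub_tsum_smoothNumbers_sub_rpow_neg_le {P M : ℕ} (hP : P.Prime)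
    (hPM : P ≤ M) {s : ℝ} (hs : 2 ≤ s) :
    |∑ j ∈ Finset.Icc 1 M, (j : ℝ) ^ (-s) - ∑' m : P.smoothNumbers, ((m : ℕ) : ℝ) ^ (-s) -
        (P : ℝ) ^ (-s)| ≤
      (∑' m : ℕ, (m : ℝ) ^ (-2 : ℝ)) * ((P : ℝ) + 1) ^ 2 * ((P : ℝ) + 1) ^ (-s) := by
  set f : ℕ → ℝ := fun m ↦ (m : ℝ) ^ (-s)
  have hf : Summable f := summable_nat_rpow.mpr (by linarith)
  set g := (Finset.Icc 1 M : Set ℕ).indicator f - P.smoothNumbers.indicator f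
  have hsum : ∑ j ∈ Finset.Icc 1 M, f j - ∑' m : P.smoothNumbers, f m = ∑' m, g m := by
    rw [sum_eq_tsum_indicator, tsum_subtype, ← (hf.indicator _).tsum_sub (hf.indicator _)]
    rfl
  have hgf (m : ℕ) : |g m| ≤ f m := abs_indicator_sub_indicator_le (fun _ ↦ by positivity) _ _ m
  have hIcc {m : ℕ} (h1 : 1 ≤ m) (hM : m ≤ M) : m ∈ (Finset.Icc 1 M : Set ℕ) :=
    Finset.mem_coe.mpr (Finset.mem_Icc.mpr ⟨h1, hM⟩)
  have hg (m : ℕ) (hm : m < P) : g m = 0 := by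
    rcases m.eq_zero_or_pos with rfl | hm0
    · have h1 : 0 ∉ (Finset.Icc 1 M : Set ℕ) := by simp
      have h2 : 0 ∉ P.smoothNumbers := fun h ↦ Nat.ne_zero_of_mem_smoothNumbers h rfl
      simp only [g, Pi.sub_apply, Set.indicator_of_notMem h1, Set.indicator_of_notMem h2,
        sub_self]
    · simp only [g, Pi.sub_apply, Set.indicator_of_mem (hIcc hm0 (by omega)),
        Set.indicator_of_mem (Nat.mem_smoothNumbers_of_lt hm0 hm), sub_self]
  have hgP : g P = f P := by
    simp only [g, Pi.sub_apply, Set.indicator_of_mem (hIcc hP.one_le hPM),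
      Set.indicator_of_notMem hP.notMem_smoothNumbers_self, sub_zero]
  calc _ = |∑' m, g m - g P| := by rw [← hsum, hgP]
    _ ≤ ∑' m, f (m + (P + 1)) := abs_tsum_sub_le_tsum_nat_add hf hgf hg
    _ ≤ _ := by exact_mod_cast tsum_nat_add_rpow_neg_le P.succ_pos hs

theorem abs_log_le_two_mul_abs_sub_one {t : ℝ} (ht : 1 / 2 ≤ t) : |log t| ≤ 2 * |t - 1| := by
  have ht0 : 0 < t := by linarith
  have hinv : |1 - t⁻¹| ≤ 2 * |t - 1| := by
    have hinv2 : t⁻¹ ≤ 2 := by rw [inv_le_comm₀ ht0 two_pos]; linarith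
    rw [show 1 - t⁻¹ = (t - 1) * t⁻¹ by field_simp, abs_mul, abs_of_pos (inv_pos.mpr ht0),
      mul_comm 2]
    gcongr
  have h1 := log_le_sub_one_of_pos ht0
  have h2 := one_sub_inv_le_log_of_pos ht0
  rw [abs_le]
  constructor <;> linarith [neg_abs_le (1 - t⁻¹), le_abs_self (t - 1), abs_nonneg (t - 1)]

theorem abs_one_sub_rpow_neg_one_div_le {t s : ℝ} (ht : |t - 1| ≤ 1 / 2) (hs : 1 ≤ s) :
    |1 - t ^ (-1 / s)| ≤ 4 * |t - 1| := by
  have ht' : 1 / 2 ≤ t := by linarith [(abs_le.mp ht).1]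
  have hlog := abs_log_le_two_mul_abs_sub_one ht'
  have hu : |log t * (-1 / s)| ≤ |log t| := by
    rw [abs_mul, neg_div, abs_neg, abs_of_pos (by positivity : (0 : ℝ) < 1 / s)]
    exact mul_le_of_le_one_right (abs_nonneg _) ((div_le_one (by linarith)).mpr hs)
  rw [rpow_def_of_pos (by linarith), abs_sub_comm]
  linarith [abs_exp_sub_one_le (hu.trans (by linarith))]

theorem tendsto_const_mul_exp_neg_mul_atTop (C : ℝ) {a : ℝ} (ha : 0 < a) :
    Tendsto (fun s ↦ C * exp (-a * s)) atTop (nhds 0) := by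
  simpa using (tendsto_exp_comp_nhds_zero.mpr
    (tendsto_id.const_mul_atTop_of_neg (neg_neg_of_pos ha))).const_mul C

theorem eventually_abs_sub_rpow_neg_one_div_le {P Q K : ℝ} (hP : 0 < P) (hPQ : P < Q)
    {x : ℝ → ℝ} (hx : ∀ᶠ s in atTop, |x s - P ^ (-s)| ≤ K * Q ^ (-s)) :
    ∀ᶠ s in atTop, |P - x s ^ (-1 / s)| ≤ 4 * P * K * exp (-log (Q / P) * s) := by
  have ha : 0 < log (Q / P) := log_pos ((one_lt_div hP).mpr hPQ)
  have hrate (s : ℝ) : Q ^ (-s) * P ^ s = exp (-log (Q / P) * s) := by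
    rw [rpow_neg (hP.trans hPQ).le, ← div_eq_inv_mul, ← div_rpow hP.le (hP.trans hPQ).le,
      rpow_def_of_pos (div_pos hP (hP.trans hPQ)), ← log_inv, inv_div]
  filter_upwards [hx, eventually_ge_atTop 1, (tendsto_const_mul_exp_neg_mul_atTop K ha).eventually
    (ge_mem_nhds one_half_pos)] with s hxs hs hsmall
  have hPs : 0 < P ^ s := rpow_pos_of_pos hP s
  set t := x s * P ^ s
  have ht : |t - 1| ≤ K * exp (-log (Q / P) * s) := by
    calc |t - 1| = |(x s - P ^ (-s)) * P ^ s| := by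
          rw [sub_mul, rpow_neg hP.le, inv_mul_cancel₀ hPs.ne']
      _ = |x s - P ^ (-s)| * P ^ s := by rw [abs_mul, abs_of_pos hPs]
      _ ≤ K * Q ^ (-s) * P ^ s := by gcongr
      _ = K * exp (-log (Q / P) * s) := by rw [mul_assoc, hrate]
  have hpow : x s ^ (-1 / s) = P * t ^ (-1 / s) := by
    have hxs : x s = t * P ^ (-s) := by
      rw [rpow_neg hP.le, mul_assoc, mul_inv_cancel₀ hPs.ne', mul_one]
    have ht0 : 0 ≤ t := by linarith [(abs_le.mp (ht.trans hsmall)).1]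
    rw [hxs, mul_rpow ht0 (rpow_nonneg hP.le _), ← rpow_mul hP.le,
      show -s * (-1 / s) = 1 by field_simp, rpow_one, mul_comm]
  rw [hpow, show P - P * t ^ (-1 / s) = P * (1 - t ^ (-1 / s)) by ring, abs_mul, abs_of_pos hP]
  calc P * |1 - t ^ (-1 / s)| ≤ P * (4 * |t - 1|) := by
        gcongr
        exact abs_one_sub_rpow_neg_one_div_le (ht.trans hsmall) hs
    _ ≤ P * (4 * (K * exp (-log (Q / P) * s))) := by gcongr
    _ = 4 * P * K * exp (-log (Q / P) * s) := by ring

/-- E_n(s) = |pₙ₊₁ − [∑_{j=1}^{2pₙ−1} j^{−s} − ∏_{k=1}^n (1 − p_k^{−s})⁻¹]^{−1/s}|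
tends to 0 as s → ∞, and decays exponentially: E_n(s) ≤ C e^{−as} eventually. -/
theorem stmt_13 (n : ℕ) (hn : 1 ≤ n) (E : ℝ → ℝ)
    (hE : ∀ s : ℝ, E s = |(Nat.nth Nat.Prime n : ℝ) -
      ((∑ j ∈ Finset.Icc 1 (2 * Nat.nth Nat.Prime (n - 1) - 1), (j : ℝ) ^ (-s)) -
        ∏ i ∈ Finset.range n, (1 - (Nat.nth Nat.Prime i : ℝ) ^ (-s))⁻¹) ^ (-1 / s)|) :
    Tendsto E atTop (nhds 0) ∧
      ∃ a > (0 : ℝ), ∃ C : ℝ, ∀ᶠ s : ℝ in atTop, E s ≤ C * Real.exp (-a * s) := by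
  obtain ⟨k, rfl⟩ : ∃ k, n = k + 1 := ⟨n - 1, by omega⟩
  set P := Nat.nth Nat.Prime (k + 1)
  have hP : P.Prime := Nat.prime_nth_prime _
  have hP0 : (0 : ℝ) < P := by exact_mod_cast hP.pos
  have hPM : P ≤ 2 * Nat.nth Nat.Prime (k + 1 - 1) - 1 :=
    Nat.le_sub_one_of_lt (Nat.nth_prime_succ_lt_two_mul k)
  set K : ℝ := (∑' m : ℕ, (m : ℝ) ^ (-2 : ℝ)) * ((P : ℝ) + 1) ^ 2
  have hx : ∀ᶠ s : ℝ in atTop,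
      |(∑ j ∈ Finset.Icc 1 (2 * Nat.nth Nat.Prime (k + 1 - 1) - 1), (j : ℝ) ^ (-s) -
          ∏ i ∈ Finset.range (k + 1), (1 - (Nat.nth Nat.Prime i : ℝ) ^ (-s))⁻¹) -
        (P : ℝ) ^ (-s)| ≤
        K * ((P : ℝ) + 1) ^ (-s) := by
    filter_upwards [eventually_ge_atTop 2] with s hs
    rw [prod_range_one_sub_nth_prime_rpow_neg_inv (by linarith)]
    exact abs_sum_Icc_sub_tsum_smoothNumbers_sub_rpow_neg_le hP hPM hs
  set a := log (((P : ℝ) + 1) / P)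
  have ha : 0 < a := log_pos ((one_lt_div hP0).mpr (lt_add_one _))
  have hbound : ∀ᶠ s : ℝ in atTop, E s ≤ 4 * P * K * exp (-a * s) := by
    simpa only [hE] using eventually_abs_sub_rpow_neg_one_div_le hP0 (lt_add_one _) hx
  exact ⟨squeeze_zero' (.of_forall fun s ↦ hE s ▸ abs_nonneg _) hbound
    (tendsto_const_mul_exp_neg_mul_atTop _ ha), a, ha, _, hbound⟩
end
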